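/- arXiv:1212.4713 — 2 statements merged into one kernel-verified Lean document; each statement's English description precedes it below -/
import Mathlib

section
/- For every complex number q with 0 < |q| < 1, the series ∑_{n=1}^∞ |log |1 − qⁿ|| converges and satisfies ∑_{n=1}^∞ |log |1 − qⁿ|| ≤ π² / (6 · log(1/|q|)). -/
/-!
With `r = ‖q‖`, each term is dominated by `-log (1 - rⁿ) = ∑ₖ rⁿᵏ / k`, since
`1 - rⁿ ≤ ‖1 - qⁿ‖ ≤ 1 + rⁿ ≤ (1 - rⁿ)⁻¹`. Summing the nonnegative double series over `n` first
gives `∑ₖ rᵏ / (k (1 - rᵏ))`, and `log x⁻¹ ≤ x⁻¹ - 1` at `x = rᵏ` bounds the `k`-th term by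
`1 / (k² log r⁻¹)`; the Basel sum `∑ 1 / k² = π² / 6` finishes the estimate.
-/

open Real

lemma abs_log_norm_one_sub_le {E : Type*} [SeminormedRing E] [NormOneClass E] {z : E}
    (hz : ‖z‖ < 1) : |log ‖1 - z‖| ≤ -log (1 - ‖z‖) := by
  have hpos : 0 < 1 - ‖z‖ := sub_pos.2 hz
  have hlower : 1 - ‖z‖ ≤ ‖1 - z‖ := by simpa using norm_sub_norm_le (1 : E) z
  have hupper : ‖1 - z‖ ≤ (1 - ‖z‖)⁻¹ := by
    calc ‖1 - z‖ ≤ 1 + ‖z‖ := by simpa using norm_sub_le (1 : E) z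
      _ ≤ (1 - ‖z‖)⁻¹ := by
        rw [inv_eq_one_div, le_div_iff₀ hpos]; nlinarith [norm_nonneg z]
  rw [abs_le, neg_neg]
  exact ⟨log_le_log hpos hlower, (log_le_log (hpos.trans_le hlower) hupper).trans_eq (log_inv _)⟩

lemma hasSum_neg_log_one_sub_pow_succ {r : ℝ} (hr0 : 0 ≤ r) (hr1 : r < 1) :
    HasSum (fun n : ℕ => -log (1 - r ^ (n + 1)))
      (∑' k : ℕ, r ^ (k + 1) / ((k + 1) * (1 - r ^ (k + 1)))) := by
  have hpow : ∀ k : ℕ, r ^ (k + 1) < 1 := fun k => pow_lt_one₀ hr0 hr1 k.add_one_ne_zero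
  let F : ℕ × ℕ → ℝ := fun p => (r ^ (p.1 + 1)) ^ (p.2 + 1) / (p.2 + 1)
  have hF0 : 0 ≤ F := fun p => by positivity
  have hcol : ∀ n : ℕ, HasSum (fun k => F (n, k)) (-log (1 - r ^ (n + 1))) := fun n =>
    hasSum_pow_div_log_of_abs_lt_one (x := r ^ (n + 1))
      ((abs_of_nonneg (pow_nonneg hr0 _)).trans_lt (hpow n))
  have hrow : ∀ k : ℕ, HasSum (fun n => F (n, k)) (r ^ (k + 1) / ((k + 1) * (1 - r ^ (k + 1)))) := by
    intro k
    have hF : (fun n => F (n, k)) = fun n => r ^ (k + 1) / (k + 1) * (r ^ (k + 1)) ^ n := by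
      ext n; simp only [F]; ring
    rw [hF, div_mul_eq_div_div, div_eq_mul_inv _ (1 - _)]
    exact (hasSum_geometric_of_lt_one (pow_nonneg hr0 (k + 1)) (hpow k)).mul_left _
  have hrowsum : Summable fun k : ℕ => r ^ (k + 1) / ((k + 1) * (1 - r ^ (k + 1))) := by
    refine .of_nonneg_of_le (fun k => (hrow k).nonneg fun n => hF0 _) (fun k => ?_)
      (((summable_nat_add_iff 1).2 (summable_geometric_of_lt_one hr0 hr1)).div_const (1 - r))
    have h1 : 1 - r ≤ 1 - r ^ (k + 1) :=
      sub_le_sub_left (pow_le_of_le_one hr0 hr1.le k.add_one_ne_zero) 1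
    refine div_le_div_of_nonneg_left (pow_nonneg hr0 _) (sub_pos.2 hr1) ?_
    exact h1.trans (le_mul_of_one_le_left (sub_pos.2 (hpow k)).le (by simp))
  have hF : Summable F := by
    refine ((summable_prod_of_nonneg fun p => hF0 p.swap).2
      ⟨fun k => (hrow k).summable, ?_⟩).prod_symm
    simpa only [Prod.swap_prod_mk, (hrow _).tsum_eq] using hrowsum
  rw [(hF.prod_symm.hasSum.prod_fiberwise hrow).tsum_eq,
    show ∑' p : ℕ × ℕ, F p.swap = ∑' p, F p from (Equiv.prodComm ℕ ℕ).tsum_eq F]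
  exact hF.hasSum.prod_fiberwise hcol

lemma div_one_sub_le_inv_log_inv {x : ℝ} (hx0 : 0 < x) (hx1 : x < 1) :
    x / (1 - x) ≤ (log x⁻¹)⁻¹ := by
  rw [← inv_div]
  refine inv_anti₀ (log_pos ((one_lt_inv₀ hx0).2 hx1)) ?_
  calc log x⁻¹ ≤ x⁻¹ - 1 := log_le_sub_one_of_pos (inv_pos.2 hx0)
    _ = (1 - x) / x := by field_simp

lemma tsum_pow_succ_div_le {r : ℝ} (hr0 : 0 < r) (hr1 : r < 1) :
    ∑' k : ℕ, r ^ (k + 1) / ((k + 1) * (1 - r ^ (k + 1))) ≤ π ^ 2 / (6 * log r⁻¹) := by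
  have hpow : ∀ k : ℕ, r ^ (k + 1) < 1 := fun k => pow_lt_one₀ hr0.le hr1 k.add_one_ne_zero
  have hzeta : HasSum (fun k : ℕ => 1 / ((k : ℝ) + 1) ^ 2 / log r⁻¹) (π ^ 2 / (6 * log r⁻¹)) := by
    rw [← div_div]
    refine HasSum.div_const ?_ _
    simpa using (hasSum_nat_add_iff' 1).2 hasSum_zeta_two
  have hterm : ∀ k : ℕ, r ^ (k + 1) / ((k + 1) * (1 - r ^ (k + 1))) ≤
      1 / ((k : ℝ) + 1) ^ 2 / log r⁻¹ := by
    intro k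
    have h := div_one_sub_le_inv_log_inv (pow_pos hr0 (k + 1)) (hpow k)
    rw [← inv_pow, log_pow] at h
    calc r ^ (k + 1) / ((k + 1) * (1 - r ^ (k + 1)))
        = r ^ (k + 1) / (1 - r ^ (k + 1)) / (k + 1) := by rw [mul_comm, div_mul_eq_div_div]
      _ ≤ (((k + 1 : ℕ) : ℝ) * log r⁻¹)⁻¹ / (k + 1) := by gcongr
      _ = 1 / ((k : ℝ) + 1) ^ 2 / log r⁻¹ := by push_cast; field_simp
  have hnonneg : ∀ k : ℕ, 0 ≤ r ^ (k + 1) / ((k + 1) * (1 - r ^ (k + 1))) := fun k =>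
    div_nonneg (pow_nonneg hr0.le _) (mul_nonneg (by positivity) (sub_pos.2 (hpow k)).le)
  exact hasSum_le hterm (Summable.of_nonneg_of_le hnonneg hterm hzeta.summable).hasSum hzeta

theorem stmt_1 (q : ℂ) (hq0 : 0 < ‖q‖) (hq1 : ‖q‖ < 1) :
    Summable (fun n : ℕ => |Real.log (‖1 - q ^ (n + 1)‖)|) ∧
      ∑' n : ℕ, |Real.log (‖1 - q ^ (n + 1)‖)| ≤
        Real.pi ^ 2 / (6 * Real.log (‖q‖)⁻¹) := by
  have hbound : ∀ n : ℕ, |log ‖1 - q ^ (n + 1)‖| ≤ -log (1 - ‖q‖ ^ (n + 1)) := fun n => by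
    simpa only [norm_pow] using abs_log_norm_one_sub_le (z := q ^ (n + 1))
      (by rw [norm_pow]; exact pow_lt_one₀ (norm_nonneg q) hq1 n.add_one_ne_zero)
  have hmajorant := hasSum_neg_log_one_sub_pow_succ (norm_nonneg q) hq1
  have hsum := Summable.of_nonneg_of_le (fun n => abs_nonneg _) hbound hmajorant.summable
  refine ⟨hsum, ?_⟩
  calc ∑' n : ℕ, |log ‖1 - q ^ (n + 1)‖|
      ≤ ∑' n : ℕ, -log (1 - ‖q‖ ^ (n + 1)) := hsum.tsum_le_tsum hbound hmajorant.summable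
    _ = ∑' k : ℕ, ‖q‖ ^ (k + 1) / ((k + 1) * (1 - ‖q‖ ^ (k + 1))) := hmajorant.tsum_eq
    _ ≤ π ^ 2 / (6 * log ‖q‖⁻¹) := tsum_pow_succ_div_le hq0 hq1
end

section
/- Let p be a prime number and let τ be a point of the complex upper half-plane with Im τ ≥ √3/2. If log |g(τ)| ≤ 12 · log p, then log(1/|q_τ|) ≤ (25·|q_τ| + 12·log p)/(p−1), and consequently log(1/|q_τ|) ≤ 2π√p. -/
/-! With `r = |q_τ| = e^{-2π Im τ}`, one has
`log |g(τ)| = (p - 1) log (1/r) + 24 ∑_{p ∤ n} log |1 - qⁿ|` and `log |1 - qⁿ| ≥ -rⁿ / (1 - r)`,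
so for `r ≤ 1/50` (guaranteed by `Im τ ≥ √3/2`) the product contributes at least
`-24 r / (1 - r)² ≥ -25 r`. This is the first bound; the second follows from
`log p ≤ 2 (√p - 1)` for `p ≥ 3` and a numerical check at `p = 2`. -/

/-- `q_τ = exp(2πiτ)`. -/
noncomputable def qt (τ : ℂ) : ℂ := Complex.exp (2 * Real.pi * Complex.I * τ)

/-- `g(τ) = exp(2πi(1−p)τ) · ∏_{n ≥ 1, p ∤ n} (1 − q_τⁿ)²⁴`. -/
noncomputable def modg (p : ℕ) (τ : ℂ) : ℂ :=
  Complex.exp (2 * Real.pi * Complex.I * ((1 : ℂ) - (p : ℂ)) * τ) *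
    ∏' n : {n : ℕ // 0 < n ∧ ¬ p ∣ n}, (1 - qt τ ^ (n : ℕ)) ^ 24

open Real

lemma neg_norm_div_le_log_norm_one_add {R : Type*} [SeminormedRing R] [NormOneClass R] {z : R}
    {r : ℝ} (hz : ‖z‖ ≤ r) (hr : r < 1) : -(‖z‖ / (1 - r)) ≤ log ‖1 + z‖ := by
  have hz1 : 0 < 1 - ‖z‖ := by linarith
  calc -(‖z‖ / (1 - r)) ≤ -(‖z‖ / (1 - ‖z‖)) := by gcongr
    _ = 1 - (1 - ‖z‖)⁻¹ := by field_simp; ring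
    _ ≤ log (1 - ‖z‖) := one_sub_inv_le_log_of_pos hz1
    _ ≤ log ‖1 + z‖ := log_le_log hz1 (by simpa using norm_sub_norm_le (1 : R) (-z))

section NormedProduct

variable {ι R : Type*} [NormedCommRing R] [NormMulClass R] [NormOneClass R] [CompleteSpace R]
  {f : ι → R} {r : ℝ}

lemma exp_neg_tsum_div_le_norm_tprod_one_add (hf : Summable (‖f ·‖))
    (hfr : ∀ i, ‖f i‖ ≤ r) (hr : r < 1) :
    exp (-((∑' i, ‖f i‖) / (1 - r))) ≤ ‖∏' i, (1 + f i)‖ := by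
  have hpos : ∀ i, 0 < ‖1 + f i‖ := fun i =>
    (sub_pos.2 ((hfr i).trans_lt hr)).trans_le (by simpa using norm_sub_norm_le (1 : R) (-f i))
  rw [(multipliable_one_add_of_summable hf).norm_tprod,
    ← rexp_tsum_eq_tprod hpos hf.summable_log_norm_one_add, exp_le_exp, ← tsum_div_const,
    ← tsum_neg]
  exact (hf.div_const _).neg.tsum_le_tsum (fun i => neg_norm_div_le_log_norm_one_add (hfr i) hr)
    hf.summable_log_norm_one_add

lemma exp_neg_mul_tsum_div_le_norm_tprod_one_add_pow (k : ℕ) (hf : Summable (‖f ·‖))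
    (hfr : ∀ i, ‖f i‖ ≤ r) (hr : r < 1) :
    exp (-(k * ((∑' i, ‖f i‖) / (1 - r)))) ≤ ‖∏' i, (1 + f i) ^ k‖ :=
  calc exp (-(k * ((∑' i, ‖f i‖) / (1 - r))))
        = exp (-((∑' i, ‖f i‖) / (1 - r))) ^ k := by rw [← exp_nat_mul]; ring_nf
    _ ≤ ‖∏' i, (1 + f i)‖ ^ k :=
        pow_le_pow_left₀ (exp_pos _).le (exp_neg_tsum_div_le_norm_tprod_one_add hf hfr hr) k
    _ = ‖∏' i, (1 + f i) ^ k‖ := by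
        rw [(multipliable_one_add_of_summable hf).tprod_pow, norm_pow]

end NormedProduct

lemma tsum_subtype_pow_le_div_one_sub {P : ℕ → Prop} (hP : ∀ n, P n → 0 < n) {r : ℝ}
    (hr0 : 0 ≤ r) (hr1 : r < 1) : ∑' n : {n // P n}, r ^ (n : ℕ) ≤ r / (1 - r) := by
  have hgeom := summable_geometric_of_lt_one hr0 hr1
  have hshift : ∑' k : ℕ, r ^ (k + 1) = r / (1 - r) := by
    simp only [pow_succ, tsum_mul_right, tsum_geometric_of_lt_one hr0 hr1, div_eq_inv_mul]
  rw [← hshift]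
  refine (hgeom.subtype _).tsum_le_tsum_of_inj (fun n => (n : ℕ) - 1) ?_
    (fun _ _ => by positivity) (fun n => by rw [Nat.sub_add_cancel (hP n n.2)])
    (by simpa [pow_succ] using hgeom.mul_right r)
  intro m n hmn
  have hm := hP m m.2
  have hn := hP n n.2
  exact Subtype.ext (by simp only at hmn; omega)

lemma exp_neg_mul_norm_le_norm_tprod_one_sub_pow {P : ℕ → Prop} (hP : ∀ n, P n → 0 < n)
    {q : ℂ} (hq : ‖q‖ ≤ 1 / 50) :
    exp (-(25 * ‖q‖)) ≤ ‖∏' n : {n // P n}, (1 - q ^ (n : ℕ)) ^ 24‖ := by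
  set r := ‖q‖
  have hr0 : 0 ≤ r := norm_nonneg q
  have hr1 : r < 1 := by linarith
  have hsum : Summable fun n : {n // P n} => ‖-q ^ (n : ℕ)‖ := by
    simpa [r, norm_pow, Function.comp_def] using (summable_geometric_of_lt_one hr0 hr1).subtype _
  have hle : ∀ n : {n // P n}, ‖-q ^ (n : ℕ)‖ ≤ r := fun n => by
    rw [norm_neg, norm_pow]; exact pow_le_of_le_one hr0 hr1.le (hP n n.2).ne'
  have hS : ∑' n : {n // P n}, ‖-q ^ (n : ℕ)‖ ≤ r / (1 - r) := by
    simpa [r, norm_pow] using tsum_subtype_pow_le_div_one_sub hP hr0 hr1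
  simp only [sub_eq_add_neg]
  refine le_trans ?_ (exp_neg_mul_tsum_div_le_norm_tprod_one_add_pow 24 hsum hle hr1)
  refine exp_le_exp.2 (neg_le_neg ?_)
  calc (24 : ℕ) * ((∑' n : {n // P n}, ‖-q ^ (n : ℕ)‖) / (1 - r))
      ≤ 24 * (r / (1 - r) / (1 - r)) := by push_cast; gcongr
    _ = 24 * r / (1 - r) ^ 2 := by field_simp
    _ ≤ 25 * r := by
        have h : 24 ≤ 25 * (1 - r) ^ 2 := by nlinarith
        rw [div_le_iff₀ (by positivity)]
        nlinarith [mul_le_mul_of_nonneg_left h hr0]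

lemma norm_qt (τ : ℂ) : ‖qt τ‖ = exp (-(2 * π * τ.im)) := by
  simp [qt, Complex.norm_exp, Complex.mul_re]

lemma log_inv_norm_qt (τ : ℂ) : log ‖qt τ‖⁻¹ = 2 * π * τ.im := by
  rw [norm_qt, ← exp_neg, neg_neg, log_exp]

lemma norm_qt_le_of_sqrt_three_div_two_le_im {τ : ℂ} (hτ : √3 / 2 ≤ τ.im) :
    ‖qt τ‖ ≤ 1 / 50 := by
  have hsqrt3 : (1.7 : ℝ) ≤ √3 := le_sqrt_of_sq_le (by norm_num)
  have hexp4 : (50 : ℝ) ≤ exp 4 := by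
    rw [show (4 : ℝ) = (4 : ℕ) by norm_num, ← exp_one_pow]
    exact le_trans (by norm_num) (pow_le_pow_left₀ (by norm_num) exp_one_gt_d9.le 4)
  rw [norm_qt, exp_neg, inv_le_comm₀ (exp_pos _) (by norm_num), one_div, inv_inv]
  exact hexp4.trans (exp_le_exp.2 (by nlinarith [pi_gt_three]))

lemma norm_modg (p : ℕ) (τ : ℂ) :
    ‖modg p τ‖ = exp ((p - 1) * (2 * π * τ.im)) *
      ‖∏' n : {n : ℕ // 0 < n ∧ ¬ p ∣ n}, (1 - qt τ ^ (n : ℕ)) ^ 24‖ := by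
  rw [modg, norm_mul, Complex.norm_exp]
  congr 2
  simp [Complex.mul_re, Complex.mul_im]
  ring

lemma div_le_two_pi_mul_sqrt {p : ℕ} (hp : 2 ≤ p) {c : ℝ} (hc : c ≤ 1 / 2) :
    (c + 12 * log p) / (p - 1) ≤ 2 * π * √p := by
  have hp' : (2 : ℝ) ≤ p := by exact_mod_cast hp
  rw [div_le_iff₀ (by linarith)]
  rcases hp.eq_or_lt with rfl | hp3
  · have hsqrt2 : (1.4142 : ℝ) ≤ √2 := le_sqrt_of_sq_le (by norm_num)
    simp only [Nat.cast_ofNat]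
    nlinarith [log_two_lt_d9, pi_gt_d6]
  · have hp3' : (3 : ℝ) ≤ p := by exact_mod_cast hp3
    set s := √(p : ℝ) with hs_def
    have hs : s ^ 2 = p := sq_sqrt (by positivity)
    have hs3 : (1.7 : ℝ) ≤ s := le_sqrt_of_sq_le (by linarith)
    have hlog : log p ≤ 2 * (s - 1) := by
      have := log_le_sub_one_of_pos (by linarith : 0 < s)
      rw [hs_def, log_sqrt (by positivity)] at this
      linarith
    have hpi : 3 * (s * (p - 1)) ≤ π * (s * (p - 1)) :=
      mul_le_mul_of_nonneg_right pi_gt_three.le (mul_nonneg (by linarith) (by linarith))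
    have hcubic : 24 * s - 23.5 ≤ 6 * (s * (p - 1)) := by
      have ht := sub_nonneg.2 hs3
      rw [← hs]
      nlinarith [mul_nonneg (mul_nonneg ht ht) ht, mul_nonneg ht ht]
    linarith

theorem stmt_5 (p : ℕ) (hp : p.Prime) (τ : ℂ) (hτ : Real.sqrt 3 / 2 ≤ τ.im)
    (hg : Real.log (‖modg p τ‖) ≤ 12 * Real.log p) :
    Real.log (‖qt τ‖)⁻¹ ≤
        (25 * ‖qt τ‖ + 12 * Real.log p) / ((p : ℝ) - 1) ∧
      Real.log (‖qt τ‖)⁻¹ ≤ 2 * Real.pi * Real.sqrt p := by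
  have hq := norm_qt_le_of_sqrt_three_div_two_le_im hτ
  have hprod := exp_neg_mul_norm_le_norm_tprod_one_sub_pow (P := fun n => 0 < n ∧ ¬ p ∣ n)
    (fun _ hn => hn.1) hq
  have hprod_pos := (exp_pos _).trans_le hprod
  rw [norm_modg, log_mul (exp_pos _).ne' hprod_pos.ne', log_exp] at hg
  have hlog_prod := (le_log_iff_exp_le hprod_pos).2 hprod
  have hp1 : (1 : ℝ) ≤ p - 1 := by
    linarith [show (2 : ℝ) ≤ p by exact_mod_cast hp.two_le]
  have hfirst : log ‖qt τ‖⁻¹ ≤ (25 * ‖qt τ‖ + 12 * log p) / (p - 1) := by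
    rw [le_div_iff₀ (by linarith), log_inv_norm_qt]
    linarith
  exact ⟨hfirst, hfirst.trans (div_le_two_pi_mul_sqrt hp.two_le (by linarith))⟩
end
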